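/- arXiv:1804.08851 — 2 statements merged into one kernel-verified Lean document; each statement's English description precedes it below -/
import Mathlib

section
/- Let n ≥ 3, x₀ ∈ ℝⁿ, R > 0, and define u(x) = (R/(R² - |x - x₀|²))^{(n-2)/2} for x in the open ball B_R(x₀). Then the conformal Hessian satisfies A^u(x) = -2 I for all x ∈ B_R(x₀). In particular, λ(-A^u) is identically equal to (2, 2, …, 2). -/
open Real Matrix Filter

noncomputable def pgrad (n : ℕ) (u : EuclideanSpace ℝ (Fin n) → ℝ)
    (x : EuclideanSpace ℝ (Fin n)) (i : Fin n) : ℝ :=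
  fderiv ℝ u x (EuclideanSpace.single i 1)

noncomputable def phess (n : ℕ) (u : EuclideanSpace ℝ (Fin n) → ℝ)
    (x : EuclideanSpace ℝ (Fin n)) (i j : Fin n) : ℝ :=
  fderiv ℝ (fun y => fderiv ℝ u y (EuclideanSpace.single j 1)) x (EuclideanSpace.single i 1)

/-- The conformal Hessian `A^u` of a positive function `u`. -/
noncomputable def confHess (n : ℕ) (u : EuclideanSpace ℝ (Fin n) → ℝ)
    (x : EuclideanSpace ℝ (Fin n)) : Matrix (Fin n) (Fin n) ℝ :=
  Matrix.of fun i j =>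
    -(2 / ((n : ℝ) - 2)) * (u x) ^ (-(((n : ℝ) + 2) / ((n : ℝ) - 2))) * phess n u x i j
    + (2 * (n : ℝ) / ((n : ℝ) - 2) ^ 2) * (u x) ^ (-(2 * (n : ℝ) / ((n : ℝ) - 2))) *
        pgrad n u x i * pgrad n u x j
    - (2 / ((n : ℝ) - 2) ^ 2) * (u x) ^ (-(2 * (n : ℝ) / ((n : ℝ) - 2))) *
        (∑ k, (pgrad n u x k) ^ 2) * (if i = j then (1 : ℝ) else 0)

/-!
Write `u = w ^ (-(n - 2) / 2)`. Then the `∇w ⊗ ∇w` terms of `A^u` cancel and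
`A^u = w ∇²w - ½ |∇w|² I`. For the quadratic `w = α - β |x - x₀|²` this is
`(α - β |x - x₀|²) (-2β) I - 2β² |x - x₀|² I = -2αβ I`, and on `B_R(x₀)` the function `u` is
`w ^ (-(n - 2) / 2)` for `α = R`, `β = R⁻¹`.
-/

section

variable {n : ℕ} {w : EuclideanSpace ℝ (Fin n) → ℝ} {x : EuclideanSpace ℝ (Fin n)}

theorem pgrad_congr {u v : EuclideanSpace ℝ (Fin n) → ℝ} (h : u =ᶠ[nhds x] v) :
    pgrad n u x = pgrad n v x := by
  ext i
  simp only [pgrad, h.fderiv_eq]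

theorem phess_congr {u v : EuclideanSpace ℝ (Fin n) → ℝ} (h : u =ᶠ[nhds x] v) :
    phess n u x = phess n v x := by
  ext i j
  have : (fun y => fderiv ℝ u y (EuclideanSpace.single j 1))
      =ᶠ[nhds x] fun y => fderiv ℝ v y (EuclideanSpace.single j 1) :=
    (h.fderiv (𝕜 := ℝ)).mono fun y hy => by simp only [hy]
  simp only [phess, this.fderiv_eq]

theorem confHess_congr {u v : EuclideanSpace ℝ (Fin n) → ℝ} (h : u =ᶠ[nhds x] v) :
    confHess n u x = confHess n v x := by
  simp only [confHess, pgrad_congr h, phess_congr h, h.self_of_nhds]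

theorem pgrad_comp {φ : ℝ → ℝ} {φ' : ℝ} (hφ : HasDerivAt φ φ' (w x))
    (hw : DifferentiableAt ℝ w x) (i : Fin n) :
    pgrad n (fun y => φ (w y)) x i = φ' * pgrad n w x i := by
  have h : HasFDerivAt (fun y => φ (w y)) (φ' • fderiv ℝ w x) x :=
    hφ.comp_hasFDerivAt x hw.hasFDerivAt
  simp [pgrad, h.fderiv]

theorem phess_comp {φ φ' : ℝ → ℝ} {φ'' : ℝ} (hφ : ∀ᶠ t in nhds (w x), HasDerivAt φ (φ' t) t)
    (hφ' : HasDerivAt φ' φ'' (w x)) (hw : ContDiffAt ℝ 2 w x) (i j : Fin n) :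
    phess n (fun y => φ (w y)) x i j
      = φ'' * pgrad n w x i * pgrad n w x j + φ' (w x) * phess n w x i j := by
  have hw_near : ∀ᶠ y in nhds x, DifferentiableAt ℝ w y :=
    (hw.eventually (by simp)).mono fun y hy => hy.differentiableAt (by norm_num)
  have hgrad_near : (fun y => fderiv ℝ (fun z => φ (w z)) y (EuclideanSpace.single j 1))
      =ᶠ[nhds x] fun y => φ' (w y) * fderiv ℝ w y (EuclideanSpace.single j 1) := by
    filter_upwards [hw_near, hw.continuousAt.eventually hφ] with y hwy hφy
    exact pgrad_comp hφy hwy j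
  have hgrad_w : HasFDerivAt (fun y => fderiv ℝ w y (EuclideanSpace.single j 1))
      (fderiv ℝ (fun y => fderiv ℝ w y (EuclideanSpace.single j 1)) x) x :=
    (((hw.fderiv_right (m := 1) le_rfl).differentiableAt (by norm_num)).clm_apply
      (differentiableAt_const _)).hasFDerivAt
  have hφ'w : HasFDerivAt (fun y => φ' (w y)) (φ'' • fderiv ℝ w x) x :=
    hφ'.comp_hasFDerivAt x (hw.differentiableAt (by norm_num)).hasFDerivAt
  simp only [phess, hgrad_near.fderiv_eq, (hφ'w.fun_mul hgrad_w).fderiv]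
  simp only [_root_.add_apply, _root_.smul_apply, smul_eq_mul, pgrad]
  ring

theorem confHess_rpow_neg (hn : n ≠ 2) (hw : ContDiffAt ℝ 2 w x) (hwx : 0 < w x) :
    confHess n (fun y => w y ^ (-(((n : ℝ) - 2) / 2))) x
      = w x • Matrix.of (phess n w x) - ((∑ k, pgrad n w x k ^ 2) / 2) • 1 := by
  have hn' : (n : ℝ) - 2 ≠ 0 := sub_ne_zero.mpr (by exact_mod_cast hn)
  set s : ℝ := -(((n : ℝ) - 2) / 2) with hs
  have hφ : ∀ᶠ t in nhds (w x), HasDerivAt (fun t => t ^ s) (s * t ^ (s - 1)) t :=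
    (lt_mem_nhds hwx).mono fun t ht => Real.hasDerivAt_rpow_const (Or.inl ht.ne')
  have hφ' : HasDerivAt (fun t => s * t ^ (s - 1)) (s * ((s - 1) * w x ^ (s - 1 - 1))) (w x) :=
    (Real.hasDerivAt_rpow_const (Or.inl hwx.ne')).const_mul s
  have hpow_sub_two : w x ^ (s - 1 - 1) = w x ^ (s - 1) / w x := Real.rpow_sub_one hwx.ne' _
  have hpow_neg_one : (w x ^ s) ^ (-(((n : ℝ) + 2) / ((n : ℝ) - 2))) = w x / w x ^ (s - 1) := by
    rw [← Real.rpow_mul hwx.le, show s * -(((n : ℝ) + 2) / ((n : ℝ) - 2)) = 1 - (s - 1) by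
      field_simp; ring, Real.rpow_sub hwx, Real.rpow_one]
  have hpow_neg_two : (w x ^ s) ^ (-(2 * (n : ℝ) / ((n : ℝ) - 2))) = ((w x ^ (s - 1)) ^ 2)⁻¹ := by
    rw [← Real.rpow_mul hwx.le, show s * -(2 * (n : ℝ) / ((n : ℝ) - 2)) = -((s - 1) * 2) by
      field_simp; ring, Real.rpow_neg hwx.le, Real.rpow_mul hwx.le, Real.rpow_two]
  have hp0 : 0 < w x ^ (s - 1) := Real.rpow_pos_of_pos hwx _
  ext i j
  simp only [confHess, Matrix.of_apply, Matrix.sub_apply, Matrix.smul_apply, Matrix.one_apply,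
    smul_eq_mul, pgrad_comp (hφ.self_of_nhds) (hw.differentiableAt (by norm_num)),
    phess_comp hφ hφ' hw, mul_pow, ← Finset.mul_sum, hpow_sub_two, hpow_neg_one, hpow_neg_two]
  -- every power of `w x` left is a rational function of `w x` and `w x ^ (s - 1)`
  generalize w x ^ (s - 1) = p at hp0 ⊢
  rw [hs]
  split_ifs <;> field_simp <;> ring

end

theorem Matrix.IsHermitian.eigenvalues_eq_of_eq_smul_one {ι 𝕜 : Type*} [Fintype ι]
    [DecidableEq ι] [RCLike 𝕜] {A : Matrix ι ι 𝕜} (hA : A.IsHermitian) {c : ℝ}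
    (h : A = c • 1) : hA.eigenvalues = fun _ => c := by
  funext i
  have hv := hA.eigenvectorBasis.orthonormal.1 i
  rw [hA.eigenvalues_eq]
  set v := hA.eigenvectorBasis i
  rw [h, Matrix.smul_mulVec, Matrix.one_mulVec, dotProduct_smul, dotProduct_comm,
    ← EuclideanSpace.inner_eq_star_dotProduct, inner_self_eq_norm_sq_to_K, hv]
  simp [RCLike.smul_re]

section

variable {n : ℕ} (α β : ℝ) (x₀ : EuclideanSpace ℝ (Fin n))

theorem contDiff_sub_mul_norm_sq {k : WithTop ℕ∞} :
    ContDiff ℝ k fun y : EuclideanSpace ℝ (Fin n) => α - β * ‖y - x₀‖ ^ 2 :=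
  contDiff_const.sub <|
    contDiff_const.mul <| (contDiff_norm_sq ℝ).comp (contDiff_id.sub contDiff_const)

theorem pgrad_sub_mul_norm_sq (x : EuclideanSpace ℝ (Fin n)) (i : Fin n) :
    pgrad n (fun y => α - β * ‖y - x₀‖ ^ 2) x i = -(2 * β) * (x i - x₀ i) := by
  have h : HasFDerivAt (fun y => α - β * ‖y - x₀‖ ^ 2) _ x :=
    (((hasFDerivAt_id x).sub_const x₀).norm_sq.const_mul β).const_sub α
  simp only [pgrad, h.fderiv, id_eq, ContinuousLinearMap.comp_id, _root_.neg_apply,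
    _root_.smul_apply, coe_innerSL_apply, EuclideanSpace.inner_single_right, PiLp.sub_apply,
    ringHom_apply, one_mul, nsmul_eq_mul, Nat.cast_ofNat, smul_eq_mul]
  ring

theorem phess_sub_mul_norm_sq (x : EuclideanSpace ℝ (Fin n)) (i j : Fin n) :
    phess n (fun y => α - β * ‖y - x₀‖ ^ 2) x i j = if i = j then -(2 * β) else 0 := by
  have hgrad : (fun y => fderiv ℝ (fun z => α - β * ‖z - x₀‖ ^ 2) y (EuclideanSpace.single j 1))
      = fun y => -(2 * β) * (y j - x₀ j) :=
    funext fun y => pgrad_sub_mul_norm_sq α β x₀ y j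
  have h : HasFDerivAt (fun y : EuclideanSpace ℝ (Fin n) => -(2 * β) * (y j - x₀ j))
      (-(2 * β) • (EuclideanSpace.proj j : EuclideanSpace ℝ (Fin n) →L[ℝ] ℝ)) x :=
    ((EuclideanSpace.proj j : EuclideanSpace ℝ (Fin n) →L[ℝ] ℝ).hasFDerivAt.sub_const
      (x₀ j)).const_mul (-(2 * β))
  rw [phess, hgrad, h.fderiv]
  by_cases hij : i = j <;> simp [hij]

theorem sum_pgrad_sub_mul_norm_sq_sq (x : EuclideanSpace ℝ (Fin n)) :
    ∑ k, pgrad n (fun y => α - β * ‖y - x₀‖ ^ 2) x k ^ 2 = 4 * β ^ 2 * ‖x - x₀‖ ^ 2 := by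
  simp_rw [pgrad_sub_mul_norm_sq, EuclideanSpace.norm_sq_eq, Finset.mul_sum, PiLp.sub_apply,
    Real.norm_eq_abs, sq_abs]
  exact Finset.sum_congr rfl fun k _ => by ring

end

theorem confHess_sub_mul_norm_sq_rpow_neg {n : ℕ} {α β : ℝ} {x₀ x : EuclideanSpace ℝ (Fin n)}
    (hn : n ≠ 2) (hx : 0 < α - β * ‖x - x₀‖ ^ 2) :
    confHess n (fun y => (α - β * ‖y - x₀‖ ^ 2) ^ (-(((n : ℝ) - 2) / 2))) x
      = (-2 * α * β) • 1 := by
  rw [confHess_rpow_neg hn (contDiff_sub_mul_norm_sq α β x₀).contDiffAt hx,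
    sum_pgrad_sub_mul_norm_sq_sq]
  ext i j
  simp only [Matrix.sub_apply, Matrix.smul_apply, Matrix.of_apply, Matrix.one_apply,
    phess_sub_mul_norm_sq, smul_eq_mul]
  split_ifs <;> ring

theorem confHess_canonical_ball_general
    (n : ℕ) (hn : 3 ≤ n) (x₀ : EuclideanSpace ℝ (Fin n)) (R : ℝ) :
    ∀ x ∈ Metric.ball x₀ R,
      confHess n (fun y => (R / (R ^ 2 - ‖y - x₀‖ ^ 2)) ^ (((n : ℝ) - 2) / 2)) x
        = (-2 : ℝ) • (1 : Matrix (Fin n) (Fin n) ℝ)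
      ∧ ∀ (h : (-(confHess n
            (fun y => (R / (R ^ 2 - ‖y - x₀‖ ^ 2)) ^ (((n : ℝ) - 2) / 2)) x)).IsHermitian),
          h.eigenvalues = fun _ => 2 := by
  intro x hx
  have hR : 0 < R := dist_nonneg.trans_lt hx
  have hball_pos : ∀ y ∈ Metric.ball x₀ R, 0 < R - R⁻¹ * ‖y - x₀‖ ^ 2 := fun y hy => by
    rw [mem_ball_iff_norm] at hy
    rw [sub_pos, inv_mul_lt_iff₀ hR, ← sq]
    gcongr
  have hu : (fun y => (R / (R ^ 2 - ‖y - x₀‖ ^ 2)) ^ (((n : ℝ) - 2) / 2))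
      =ᶠ[nhds x] fun y => (R - R⁻¹ * ‖y - x₀‖ ^ 2) ^ (-(((n : ℝ) - 2) / 2)) := by
    filter_upwards [Metric.isOpen_ball.mem_nhds hx] with y hy
    have hpos := hball_pos y hy
    rw [Real.rpow_neg hpos.le, ← Real.inv_rpow hpos.le]
    congr 1
    field_simp
  have hA : confHess n (fun y => (R / (R ^ 2 - ‖y - x₀‖ ^ 2)) ^ (((n : ℝ) - 2) / 2)) x
      = (-2 : ℝ) • 1 := by
    rw [confHess_congr hu, confHess_sub_mul_norm_sq_rpow_neg (by omega) (hball_pos x hx),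
      mul_assoc, mul_inv_cancel₀ hR.ne', mul_one]
  exact ⟨hA, fun h => h.eigenvalues_eq_of_eq_smul_one (by rw [hA, ← neg_smul, neg_neg])⟩

/-- for `u(x) = (R/(R² - |x-x₀|²))^{(n-2)/2}` on `B_R(x₀)`,
`A^u ≡ -2 I` and the eigenvalues of `-A^u` are all equal to `2`. -/
theorem confHess_canonical_ball
    (n : ℕ) (hn : 3 ≤ n) (x₀ : EuclideanSpace ℝ (Fin n)) (R : ℝ) (hR : 0 < R) :
    ∀ x ∈ Metric.ball x₀ R,
      confHess n (fun y => (R / (R ^ 2 - ‖y - x₀‖ ^ 2)) ^ (((n : ℝ) - 2) / 2)) x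
        = (-2 : ℝ) • (1 : Matrix (Fin n) (Fin n) ℝ)
      ∧ ∀ (h : (-(confHess n
            (fun y => (R / (R ^ 2 - ‖y - x₀‖ ^ 2)) ^ (((n : ℝ) - 2) / 2)) x)).IsHermitian),
          h.eigenvalues = fun _ => 2 :=
  confHess_canonical_ball_general n hn x₀ R
end

section
/- Let n ≥ 3 and 1 ≤ k ≤ n-1. Write points of ℝⁿ as x = (x', x'') with x' ∈ ℝ^{n-k}, x'' ∈ ℝᵏ, and define u(x) = |x''|^{-(n-2)/2} on {x : x'' ≠ 0}. Then at every such point, -A^u equals (1/2) times a symmetric matrix whose eigenvalues, counted with multiplicity, are 1 with multiplicity n-k+1 and -1 with multiplicity k-1; i.e. λ(-A^u) = (1/2) v_k as multisets, where v_k = (1,…,1,-1,…,-1) with n-k+1 ones and k-1 minus-ones. -/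
open Real Matrix Filter

/-
Put `r = |x''|²`, so that `u = r ^ q` with `q = -(n-2)/4`. Differentiating twice, all powers
of `r` cancel in `A^u` and one finds `-A^u = D + r⁻¹ x'' ⊗ x''`, where `D` is diagonal with
entries `1/2` on the `x'`-block and `-1/2` on the `x''`-block. The rank-one term leaves `-1/2` on
the orthogonal complement of `x''` inside the `x''`-block and turns the eigenvalue on `x''` into
`-1/2 + 1 = 1/2`. On characteristic polynomials this is the matrix determinant lemma, applied at
every `t` outside the spectrum of `D`.
-/

open Finset Polynomial

theorem Fin.card_filter_le_val {n : ℕ} (m : ℕ) : #{i : Fin n | m ≤ (i : ℕ)} = n - m := by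
  have hsplit :=
    card_filter_add_card_filter_not (s := (univ : Finset (Fin n))) (fun i => (i : ℕ) < m)
  simp only [not_lt, Fin.card_filter_val_lt, card_univ, Fintype.card_fin] at hsplit
  omega

theorem det_diagonal_add_vecMulVec {ι K : Type*} [Fintype ι] [DecidableEq ι] [Field K]
    {a : ι → K} (ha : ∀ i, a i ≠ 0) (u v : ι → K) :
    (diagonal a + vecMulVec u v).det = (∏ i, a i) * (1 + ∑ i, v i * u i / a i) := by
  have hfactor : diagonal a + vecMulVec u v
      = diagonal a * (1 + vecMulVec (fun i => u i / a i) v) := by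
    rw [Matrix.mul_add, Matrix.mul_one]
    ext i j
    rw [Matrix.add_apply, Matrix.add_apply, diagonal_mul, vecMulVec_apply, vecMulVec_apply,
      ← mul_assoc, mul_div_cancel₀ _ (ha i)]
  rw [hfactor, det_mul, det_diagonal, vecMulVec_eq Unit, det_one_add_replicateCol_mul_replicateRow]
  simp only [dotProduct, mul_div_assoc]

theorem charpoly_diagonal_ite {ι R : Type*} [Fintype ι] [DecidableEq ι] [CommRing R]
    (p : ι → Prop) [DecidablePred p] (a b : R) :
    (diagonal fun i => if p i then a else b).charpoly
      = (X - C a) ^ #{i | p i} * (X - C b) ^ #{i | ¬ p i} := by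
  rw [charpoly_diagonal, prod_apply_ite (h := fun r => X - C r), prod_const, prod_const]

theorem charpoly_diagonal_ite_mem_add_smul_vecMulVec {ι K : Type*} [Fintype ι] [DecidableEq ι]
    [Field K] [Infinite K] {S : Finset ι} (hS : S.Nonempty) (a b c : K) {w : ι → K}
    (hw : ∀ i ∉ S, w i = 0) :
    (diagonal (fun i => if i ∈ S then a else b) + c • vecMulVec w w).charpoly
      = (X - C b) ^ (Fintype.card ι - #S) * (X - C a) ^ (#S - 1)
          * (X - C (a + c * ∑ i, w i ^ 2)) := by
  refine eq_of_infinite_eval_eq _ _ (((Set.toFinite {a, b}).infinite_compl).mono ?_)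
  intro t ht
  simp only [Set.mem_compl_iff, Set.mem_insert_iff, Set.mem_singleton_iff, not_or] at ht
  obtain ⟨hta, htb⟩ := ht
  have hshift : scalar ι t - (diagonal (fun i => if i ∈ S then a else b) + c • vecMulVec w w)
      = diagonal (fun i => if i ∈ S then t - a else t - b) + vecMulVec (-c • w) w := by
    ext i j
    by_cases hij : i = j
    · subst hij
      by_cases hi : i ∈ S <;> simp [hi, vecMulVec_apply] <;> ring
    · simp [hij, vecMulVec_apply]
  have hsum : ∑ i, w i * (-c • w) i / (if i ∈ S then t - a else t - b)
      = -(c * ∑ i, w i ^ 2) / (t - a) := by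
    rw [Finset.mul_sum, ← Finset.sum_neg_distrib, Finset.sum_div]
    refine Finset.sum_congr rfl fun i _ => ?_
    by_cases hi : i ∈ S
    · simp only [hi, if_true, Pi.smul_apply, smul_eq_mul]; ring
    · simp [hi, hw i hi]
  obtain ⟨m, hm⟩ : ∃ m, #S = m + 1 := ⟨#S - 1, by have := hS.card_pos; omega⟩
  have hcompl : #{i | i ∉ S} = Fintype.card ι - #S := by
    rw [filter_not, filter_mem_eq_inter, univ_inter, card_univ_sdiff]
  simp only [Set.mem_ofPred_eq, eval_charpoly, hshift, eval_mul, eval_pow, eval_sub, eval_X,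
    eval_C]
  rw [det_diagonal_add_vecMulVec (fun i => by split_ifs <;> exact sub_ne_zero.2 ‹_›), hsum,
    Finset.prod_ite, prod_const, prod_const, filter_mem_eq_inter, univ_inter, hcompl, hm,
    Nat.add_sub_cancel]
  field_simp [sub_ne_zero.2 hta]
  ring

section Derivatives

variable {ι : Type*} (S : Finset ι)

theorem hasFDerivAt_sum_sq [Fintype ι] (x : EuclideanSpace ℝ ι) :
    HasFDerivAt (fun y : EuclideanSpace ℝ ι => ∑ i ∈ S, y i ^ 2)
      (∑ i ∈ S, (2 * x i) • EuclideanSpace.proj (𝕜 := ℝ) i) x := by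
  refine HasFDerivAt.fun_sum fun i _ => ?_
  simpa using ((EuclideanSpace.proj (𝕜 := ℝ) i).hasFDerivAt (x := x)).pow 2

theorem sum_smul_proj_apply_single [DecidableEq ι] (x : EuclideanSpace ℝ ι) (l : ι) :
    (∑ i ∈ S, (2 * x i) • EuclideanSpace.proj (𝕜 := ℝ) i) (EuclideanSpace.single l 1)
      = if l ∈ S then 2 * x l else 0 := by
  simp [PiLp.single_apply]

theorem fderiv_rpow_sum_sq_single [Fintype ι] [DecidableEq ι] (q : ℝ)
    {y : EuclideanSpace ℝ ι} (hy : 0 < ∑ i ∈ S, y i ^ 2) (l : ι) :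
    fderiv ℝ (fun z => (∑ i ∈ S, z i ^ 2) ^ q) y (EuclideanSpace.single l 1)
      = q * (∑ i ∈ S, y i ^ 2) ^ (q - 1) * (if l ∈ S then 2 * y l else 0) := by
  rw [((hasFDerivAt_sum_sq S y).rpow_const (Or.inl hy.ne')).fderiv, _root_.smul_apply,
    sum_smul_proj_apply_single, smul_eq_mul]

end Derivatives

theorem phess_rpow_sum_sq {n : ℕ} (S : Finset (Fin n)) (q : ℝ) {x : EuclideanSpace ℝ (Fin n)}
    (hx : 0 < ∑ i ∈ S, x i ^ 2) (i j : Fin n) :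
    phess n (fun z => (∑ i ∈ S, z i ^ 2) ^ q) x i j
      = q * (q - 1) * (∑ i ∈ S, x i ^ 2) ^ (q - 1 - 1)
          * (if i ∈ S then 2 * x i else 0) * (if j ∈ S then 2 * x j else 0)
        + q * (∑ i ∈ S, x i ^ 2) ^ (q - 1)
          * (if j ∈ S then (if i = j then 2 else 0) else 0) := by
  have hopen : IsOpen {y : EuclideanSpace ℝ (Fin n) | 0 < ∑ i ∈ S, y i ^ 2} :=
    isOpen_lt continuous_const (continuous_finsetSum _ fun i _ => by fun_prop)
  have hpartial :
      (fun y => fderiv ℝ (fun z => (∑ i ∈ S, z i ^ 2) ^ q) y (EuclideanSpace.single j 1))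
        =ᶠ[nhds x]
      fun y => q * (∑ i ∈ S, y i ^ 2) ^ (q - 1) * (if j ∈ S then 2 * y j else 0) :=
    eventuallyEq_of_mem (hopen.mem_nhds hx) fun y hy => fderiv_rpow_sum_sq_single S q hy j
  have hcoord : HasFDerivAt (fun y : EuclideanSpace ℝ (Fin n) => if j ∈ S then 2 * y j else 0)
      (if j ∈ S then (2 : ℝ) • EuclideanSpace.proj (𝕜 := ℝ) j else 0) x := by
    split_ifs
    · exact ((EuclideanSpace.proj (𝕜 := ℝ) j).hasFDerivAt).const_mul 2
    · exact hasFDerivAt_const 0 x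
  have hprod :=
    (((hasFDerivAt_sum_sq S x).rpow_const (p := q - 1) (Or.inl hx.ne')).const_mul q).fun_mul
      hcoord
  rw [phess, hpartial.fderiv_eq, hprod.fderiv]
  simp only [_root_.add_apply, _root_.smul_apply, sum_smul_proj_apply_single, smul_eq_mul]
  split_ifs <;> simp_all <;> ring

theorem neg_confHess_sqrt_sum_sq_rpow {n : ℕ} (hn : (n : ℝ) ≠ 2) (S : Finset (Fin n))
    {x : EuclideanSpace ℝ (Fin n)} (hx : 0 < ∑ i ∈ S, x i ^ 2) :
    -confHess n (fun y => √(∑ i ∈ S, y i ^ 2) ^ (-(((n : ℝ) - 2) / 2))) x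
      = diagonal (fun i => if i ∈ S then -(1 / 2) else 1 / 2)
        + (∑ i ∈ S, x i ^ 2)⁻¹ • vecMulVec (fun i => if i ∈ S then x i else 0)
            (fun i => if i ∈ S then x i else 0) := by
  have hn2 : (n : ℝ) - 2 ≠ 0 := sub_ne_zero.2 hn
  have hu :
      (fun y : EuclideanSpace ℝ (Fin n) => √(∑ i ∈ S, y i ^ 2) ^ (-(((n : ℝ) - 2) / 2)))
        = fun y => (∑ i ∈ S, y i ^ 2) ^ (-(((n : ℝ) - 2) / 4)) := by
    funext y
    rw [Real.sqrt_eq_rpow, ← Real.rpow_mul (sum_nonneg fun i _ => sq_nonneg _)]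
    ring_nf
  set q : ℝ := -(((n : ℝ) - 2) / 4) with hq
  set r := ∑ i ∈ S, x i ^ 2
  -- every power of `r` below is `P ^ a * r ^ b` with `a, b` integers
  set P := r ^ (((n : ℝ) + 2) / 4)
  have hP : 0 < P := Real.rpow_pos_of_pos hx _
  have hrinv : r⁻¹ = r ^ (-1 : ℝ) := (Real.rpow_neg_one r).symm
  have e1 : (r ^ q) ^ (-(((n : ℝ) + 2) / ((n : ℝ) - 2))) = P := by
    rw [← Real.rpow_mul hx.le]; congr 1; field_simp; ring
  have e2 : (r ^ q) ^ (-(2 * (n : ℝ) / ((n : ℝ) - 2))) = P ^ 2 * r⁻¹ := by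
    rw [← Real.rpow_mul hx.le, ← Real.rpow_natCast, ← Real.rpow_mul hx.le, hrinv,
      ← Real.rpow_add hx]
    congr 1; field_simp; ring
  have e3 : r ^ (q - 1) = P⁻¹ := by
    rw [← Real.rpow_neg hx.le]; congr 1; ring
  have e4 : r ^ (q - 1 - 1) = P⁻¹ * r⁻¹ := by
    rw [← Real.rpow_neg hx.le, hrinv, ← Real.rpow_add hx]; congr 1; ring
  have hgrad (l : Fin n) : pgrad n (fun y => (∑ i ∈ S, y i ^ 2) ^ q) x l
      = q * P⁻¹ * (if l ∈ S then 2 * x l else 0) := by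
    rw [pgrad, fderiv_rpow_sum_sq_single S q hx, e3]
  have hgrad_sq :
      ∑ l, pgrad n (fun y => (∑ i ∈ S, y i ^ 2) ^ q) x l ^ 2
        = 4 * q ^ 2 * P⁻¹ ^ 2 * r := by
    simp_rw [hgrad, mul_pow, ite_pow, mul_pow, zero_pow two_ne_zero, mul_ite, mul_zero,
      sum_ite_mem, univ_inter, ← mul_sum]
    ring
  ext i j
  rw [hu, Matrix.neg_apply, confHess, of_apply, phess_rpow_sum_sq S q hx, hgrad, hgrad,
    hgrad_sq, e1, e2, e3, e4]
  simp only [Matrix.add_apply, diagonal_apply, Matrix.smul_apply, vecMulVec_apply, smul_eq_mul]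
  clear_value q r P
  subst hq
  rcases eq_or_ne i j with rfl | hij <;> split_ifs <;> field_simp <;> ring

/-- for `u(x) = |x''|^{-(n-2)/2}` on `{x'' ≠ 0}` (where `x''` consists of the
last `k` coordinates), the eigenvalues of `-A^u` are, as a multiset (encoded via the
characteristic polynomial), `1/2` with multiplicity `n-k+1` and `-1/2` with multiplicity
`k-1`, i.e. `λ(-A^u) = (1/2) v_k`. -/
theorem eigenvalues_model_metric
    (n k : ℕ) (hn : 3 ≤ n) (hk1 : 1 ≤ k) (hkn : k ≤ n - 1) :
    ∀ x : EuclideanSpace ℝ (Fin n),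
      0 < ∑ i ∈ Finset.univ.filter (fun i : Fin n => n - k ≤ (i : ℕ)), (x i) ^ 2 →
      (-(confHess n
          (fun y => (Real.sqrt (∑ i ∈ Finset.univ.filter (fun i : Fin n => n - k ≤ (i : ℕ)),
              (y i) ^ 2)) ^ (-(((n : ℝ) - 2) / 2))) x)).charpoly
        = (Matrix.diagonal (fun i : Fin n =>
            if (i : ℕ) < n - k + 1 then (1 : ℝ) / 2 else -(1 / 2))).charpoly := by
  intro x hx
  set S := Finset.univ.filter (fun i : Fin n => n - k ≤ (i : ℕ))
  have hS : #S = k := by rw [Fin.card_filter_le_val]; omega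
  have hn2 : (n : ℝ) ≠ 2 := by
    have : (3 : ℝ) ≤ n := by exact_mod_cast hn
    linarith
  have hw_sq : ∑ i, (if i ∈ S then x i else 0) ^ 2 = ∑ i ∈ S, x i ^ 2 := by
    simp only [ite_pow, zero_pow two_ne_zero, sum_ite_mem, univ_inter]
  have h_lt : #{i : Fin n | (i : ℕ) < n - k + 1} = n - k + 1 := by
    rw [Fin.card_filter_val_lt]; omega
  have h_not_lt : #{i : Fin n | ¬(i : ℕ) < n - k + 1} = k - 1 := by
    simp only [not_lt]; rw [Fin.card_filter_le_val]; omega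
  rw [neg_confHess_sqrt_sum_sq_rpow hn2 S hx,
    charpoly_diagonal_ite_mem_add_smul_vecMulVec (card_pos.1 (by omega)) _ _ _
      fun i hi => if_neg hi,
    charpoly_diagonal_ite, Fintype.card_fin, hS, hw_sq, inv_mul_cancel₀ hx.ne', h_lt, h_not_lt,
    show -(1 / 2) + 1 = (1 / 2 : ℝ) by norm_num]
  ring
end
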